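/- arXiv:2105.13941 — 2 statements merged into one kernel-verified Lean document; each statement's English description precedes it below -/
import Mathlib

section
/- Let T = (V,R) be a linear transition system on a finite-dimensional ℚ-vector space V. For each k ≥ 1 let dom(T^k) = {x₀ ∈ V : ∃ x₁,…,x_k ∈ V with (x_{i},x_{i+1}) ∈ R for all 0 ≤ i < k}. Then each dom(T^k) is a ℚ-linear subspace of V, the chain is descending (dom(T^{k+1}) ⊆ dom(T^k)), and if moreover R is deterministic and dom(T^{k+1}) = dom(T^k) for some k, then dom^ω(T) = dom(T^k). In particular, for a deterministic linear transition system, dom^ω(T) is a ℚ-linear subspace of V and equals dom(T^k) for some k. -/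
open Module

section Defs

variable {V W : Type} [AddCommGroup V] [Module ℚ V] [AddCommGroup W] [Module ℚ W]

/-- A transition system is *deterministic* if each state has at most one successor. -/
def Deterministic (R : Set (V × V)) : Prop :=
  ∀ x y₁ y₂ : V, (x, y₁) ∈ R → (x, y₂) ∈ R → y₁ = y₂

/-- A transition system is *linear* if its relation is (the carrier of) a ℚ-linear
subspace of `V × V`. -/
def IsLinearRel (R : Set (V × V)) : Prop :=
  ∃ p : Submodule ℚ (V × V), (p : Set (V × V)) = R

/-- A transition system is *affine* if its relation is an affine subspace of `V × V`. -/
def IsAffineRel (R : Set (V × V)) : Prop :=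
  ∃ A : AffineSubspace ℚ (V × V), (A : Set (V × V)) = R

/-- A ℚ-linear map `s` is a *linear simulation* from `(V, R)` to `(W, S)`. -/
def Sim (R : Set (V × V)) (S : Set (W × W)) (s : V →ₗ[ℚ] W) : Prop :=
  ∀ x x' : V, (x, x') ∈ R → (s x, s x') ∈ S

/-- `dom^ω(T)`: the set of states from which an infinite trajectory exists. -/
def OmegaDom (R : Set (V × V)) : Set V :=
  {x | ∃ u : ℕ → V, u 0 = x ∧ ∀ k : ℕ, (u k, u (k + 1)) ∈ R}

/-- `dom(T^k)`: the set of states from which a trajectory of length `k` exists. -/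
def DomK (R : Set (V × V)) (k : ℕ) : Set V :=
  {x | ∃ u : ℕ → V, u 0 = x ∧ ∀ i : ℕ, i < k → (u i, u (i + 1)) ∈ R}

/-- A (deterministic linear) transition system has *rational spectrum* if the induced
linear map `T|_ω` on its ω-domain has characteristic polynomial splitting over ℚ. -/
def HasRationalSpectrum [FiniteDimensional ℚ V] (R : Set (V × V)) : Prop :=
  ∃ (p : Submodule ℚ V) (f : Module.End ℚ p),
    (p : Set V) = OmegaDom R ∧ (∀ x : p, ((x : V), (f x : V)) ∈ R) ∧
    ((LinearMap.charpoly f).map (RingHom.id ℚ)).Splits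

/-- The homogenization of an affine relation `R` with respect to a chosen
transition `(x₀, x₀')`. -/
def Homog (R : Set (V × V)) (x₀ x₀' : V) : Set ((V × ℚ) × (V × ℚ)) :=
  {p | p.1.2 = p.2.2 ∧ (p.1.1 + (1 - p.1.2) • x₀, p.2.1 + (1 - p.1.2) • x₀') ∈ R}

/-- A deterministic affine transition system is a ℚ-DATS if its relation is empty or
its homogenization is a deterministic linear transition system with rational spectrum. -/
def IsQDATS [FiniteDimensional ℚ V] (R : Set (V × V)) : Prop :=
  IsAffineRel R ∧ Deterministic R ∧
    (R = ∅ ∨ ∃ t ∈ R, IsLinearRel (Homog R t.1 t.2) ∧ Deterministic (Homog R t.1 t.2) ∧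
      HasRationalSpectrum (Homog R t.1 t.2))

/-- The map `s : V → Λ*` sending `x` to the evaluation functional `f ↦ f x`
(the simulation component of `α_Λ`). -/
def evalIn (Λ : Submodule ℚ (Module.Dual ℚ V)) : V →ₗ[ℚ] Module.Dual ℚ Λ :=
  Λ.subtype.dualMap ∘ₗ Module.Dual.eval ℚ V

/-- The relation component of `α_Λ`: the image of `R` under the simulation. -/
def ImageRel (R : Set (V × V)) (Λ : Submodule ℚ (Module.Dual ℚ V)) :
    Set (Module.Dual ℚ Λ × Module.Dual ℚ Λ) :=
  (fun p : V × V => (evalIn Λ p.1, evalIn Λ p.2)) '' R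

/-- `T` is `(Λ, Λ')`-deterministic. -/
def PairDet (R : Set (V × V)) (Λ Λ' : Submodule ℚ (Module.Dual ℚ V)) : Prop :=
  ∀ x₁ x₂ x₁' x₂' : V, (∀ f ∈ Λ, f x₁ = f x₂) → (x₁, x₁') ∈ R → (x₂, x₂') ∈ R →
    ∀ g ∈ Λ', g x₁' = g x₂'

/-- `Det(T, Λ)`: the functionals `f` such that `T` is `(Λ, span{f})`-deterministic. -/
def DetSet (R : Set (V × V)) (Λ : Submodule ℚ (Module.Dual ℚ V)) :
    Set (Module.Dual ℚ V) :=
  {f | PairDet R Λ (Submodule.span ℚ {f})}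

/-- The generating set of the generalized rational eigenspace `E_ℚ(T)`, where
`f : p → p` is the induced map `T|_ω` on the ω-domain `p`. -/
def GenRatEigenSet (p : Submodule ℚ V) (f : Module.End ℚ p) : Set (Module.Dual ℚ V) :=
  {g | ∃ (l : ℚ) (r : ℕ), 1 ≤ r ∧
    ∀ x : p, g (((f - l • (1 : Module.End ℚ p)) ^ r) x : V) = 0}

end Defs

/-- A bundled finite-dimensional ℚ-vector space. -/
structure QVec where
  carrier : Type
  [grp : AddCommGroup carrier]
  [mod : Module ℚ carrier]
  [fin : FiniteDimensional ℚ carrier]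

attribute [instance] QVec.grp QVec.mod QVec.fin

/-!
Each `dom(T^k)` is the projection to the first coordinate of a subspace of trajectories, hence a
subspace, and these subspaces descend, so in finite dimension they stabilize. Once
`dom(T^(k+1)) = dom(T^k)`, every state of `dom(T^k)` has a successor in `dom(T^k)`; choosing
successors repeatedly builds an infinite trajectory, so `dom(T^k) ⊆ dom^ω(T)`.
-/

section TransitionSystem

variable {V : Type}

theorem domK_succ_subset (R : Set (V × V)) (k : ℕ) : DomK R (k + 1) ⊆ DomK R k :=
  fun _ ⟨u, hu0, hu⟩ => ⟨u, hu0, fun i hi => hu i (Nat.lt_succ_of_lt hi)⟩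

theorem omegaDom_subset_domK (R : Set (V × V)) (k : ℕ) : OmegaDom R ⊆ DomK R k :=
  fun _ ⟨u, hu0, hu⟩ => ⟨u, hu0, fun i _ => hu i⟩

theorem subset_omegaDom_of_forall_exists_mem {R : Set (V × V)} {S : Set V}
    (hS : ∀ x ∈ S, ∃ y ∈ S, (x, y) ∈ R) : S ⊆ OmegaDom R := by
  choose next hnext_mem hnext_rel using hS
  let step : S → S := fun x => ⟨next x x.2, hnext_mem x x.2⟩
  intro x hx
  refine ⟨fun n => (step^[n] ⟨x, hx⟩ : V), rfl, fun n => ?_⟩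
  simp only [Function.iterate_succ_apply']
  exact hnext_rel _ _

theorem exists_mem_domK_of_mem_domK_succ {R : Set (V × V)} {k : ℕ} {x : V}
    (hx : x ∈ DomK R (k + 1)) : ∃ y ∈ DomK R k, (x, y) ∈ R := by
  obtain ⟨u, rfl, hu⟩ := hx
  exact ⟨u 1, ⟨fun i => u (i + 1), rfl, fun i hi => hu (i + 1) (by omega)⟩, hu 0 k.succ_pos⟩

theorem omegaDom_eq_domK_of_domK_succ_eq {R : Set (V × V)} {k : ℕ}
    (h : DomK R (k + 1) = DomK R k) : OmegaDom R = DomK R k := by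
  refine (omegaDom_subset_domK R k).antisymm (subset_omegaDom_of_forall_exists_mem ?_)
  intro x hx
  exact exists_mem_domK_of_mem_domK_succ (h ▸ hx)

section Linear

variable [AddCommGroup V] [Module ℚ V]

def domKSubmodule (P : Submodule ℚ (V × V)) (k : ℕ) : Submodule ℚ V where
  carrier := DomK (P : Set (V × V)) k
  zero_mem' := ⟨fun _ => 0, rfl, fun _ _ => P.zero_mem⟩
  add_mem' := by
    rintro _ _ ⟨u, rfl, hu⟩ ⟨v, rfl, hv⟩
    exact ⟨u + v, rfl, fun i hi => P.add_mem (hu i hi) (hv i hi)⟩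
  smul_mem' := by
    rintro c _ ⟨u, rfl, hu⟩
    exact ⟨c • u, rfl, fun i hi => P.smul_mem c (hu i hi)⟩

theorem antitone_domKSubmodule (P : Submodule ℚ (V × V)) :
    Antitone (domKSubmodule P) :=
  antitone_nat_of_succ_le fun k => domK_succ_subset (P : Set (V × V)) k

theorem exists_domK_succ_eq [FiniteDimensional ℚ V] (P : Submodule ℚ (V × V)) :
    ∃ k, 1 ≤ k ∧ DomK (P : Set (V × V)) (k + 1) = DomK (P : Set (V × V)) k := by
  obtain ⟨n, hn⟩ := WellFoundedLT.antitone_chain_condition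
    ((antitone_domKSubmodule P).comp_monotone fun _ _ => Nat.succ_le_succ)
  exact ⟨n + 1, n.succ_pos, congrArg SetLike.coe (hn (n + 1) n.le_succ).symm⟩

end Linear

end TransitionSystem

/-- for a linear transition system the sets `dom(T^k)` are linear
subspaces forming a descending chain, and for a deterministic linear transition
system a stabilization point of the chain equals `dom^ω(T)`; in particular
`dom^ω(T)` is a linear subspace and equals some `dom(T^k)`. -/
theorem dom_chain_stabilizes
    (V : Type) [AddCommGroup V] [Module ℚ V] [FiniteDimensional ℚ V]
    (R : Set (V × V)) (hlin : IsLinearRel R) :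
    (∀ k : ℕ, 1 ≤ k → ∃ p : Submodule ℚ V, (p : Set V) = DomK R k) ∧
    (∀ k : ℕ, 1 ≤ k → DomK R (k + 1) ⊆ DomK R k) ∧
    (Deterministic R →
      ∀ k : ℕ, 1 ≤ k → DomK R (k + 1) = DomK R k → OmegaDom R = DomK R k) ∧
    (Deterministic R →
      ∃ k : ℕ, 1 ≤ k ∧ OmegaDom R = DomK R k ∧
        ∃ p : Submodule ℚ V, (p : Set V) = OmegaDom R) := by
  obtain ⟨P, rfl⟩ := hlin
  refine ⟨fun k _ => ⟨domKSubmodule P k, rfl⟩, fun k _ => domK_succ_subset _ k,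
    fun _ _ _ => omegaDom_eq_domK_of_domK_succ_eq, fun _ => ?_⟩
  obtain ⟨k, hk, hstable⟩ := exists_domK_succ_eq P
  have homega := omegaDom_eq_domK_of_domK_succ_eq hstable
  exact ⟨k, hk, homega, domKSubmodule P k, homega.symm⟩
end

section
/- Let V be a finite-dimensional ℚ-vector space and f : V → V a ℚ-linear map whose characteristic polynomial splits over ℚ (all eigenvalues of f are rational). Let v₁,…,v_m ∈ V and let L be the ℤ-span of {v₁,…,v_m}. Suppose x ∈ V satisfies f^k(x) ∈ L for every k ∈ ℕ. Then x belongs to the ℚ-span of the set {v ∈ V : ∃ λ ∈ ℤ, ∃ r ≥ 1, ((f − λ·id)^r)(v) = 0}, i.e., x lies in the sum of the generalized eigenspaces of f corresponding to integer eigenvalues. -/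
open Module

/-!
The ℤ-span `M` of the orbit `{fᵏ x}` is a finitely generated `f`-stable lattice. If `w` is an
eigenvector of `f`, with eigenvalue `μ`, in the ℚ-span of the orbit, some nonzero multiple of `w`
lies in `M`, so `M ∩ ℚw` is a nonzero finitely generated ℤ-module stable under multiplication
by `μ`; hence `μ` is an algebraic integer, i.e. an integer. Since the characteristic polynomial
splits, `V` is the sum of the generalized eigenspaces of `f`, and the `f`-stable ℚ-span of the
orbit is the sum of its intersections with them; each nonzero intersection contains an
eigenvector, so only integer eigenvalues contribute.
-/

open Polynomial Set

namespace Module.End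

section Splits

variable {K V : Type*} [Field K] [AddCommGroup V] [Module K V]

theorem ker_aeval_le_iSup_maxGenEigenspace_of_splits (f : End K V) {p : K[X]} (hp : p.Splits)
    (hp0 : p ≠ 0) : LinearMap.ker (aeval f p) ≤ ⨆ μ, f.maxGenEigenspace μ := by
  by_cases hdeg : p.degree = 0
  · rw [← (isUnit_iff_degree_eq_zero.mpr hdeg).unit_spec, ker_aeval_ring_hom'_unit_polynomial]
    exact bot_le
  obtain ⟨μ, hμ⟩ := hp.exists_eval_eq_zero hdeg
  set m := p.rootMultiplicity μ
  obtain ⟨q, hpq, hμq⟩ := p.exists_eq_pow_rootMultiplicity_mul_and_not_dvd hp0 μ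
  have hq0 : q ≠ 0 := by rintro rfl; exact hp0 (by rw [hpq, mul_zero])
  have hm : 0 < m := (rootMultiplicity_pos hp0).mpr hμ
  have hlt : q.natDegree < p.natDegree := by
    rw [hpq, natDegree_mul (pow_ne_zero _ (X_sub_C_ne_zero μ)) hq0, natDegree_pow,
      natDegree_X_sub_C]
    omega
  have hcop : IsCoprime ((X - C μ) ^ m) q :=
    ((irreducible_X_sub_C μ).coprime_iff_not_dvd.mpr hμq).pow_left
  rw [hpq, ← sup_ker_aeval_eq_ker_aeval_mul_of_coprime f hcop]
  have hq : q.Splits := hp.of_dvd hp0 (Dvd.intro_left _ hpq.symm)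
  refine sup_le (fun y hy ↦ le_iSup f.maxGenEigenspace μ ?_)
    (ker_aeval_le_iSup_maxGenEigenspace_of_splits f hq hq0)
  rw [mem_maxGenEigenspace]
  exact ⟨m, by simpa [Module.algebraMap_end_eq_smul_id, one_eq_id] using hy⟩
termination_by p.natDegree

theorem iSup_maxGenEigenspace_eq_top_of_splits [FiniteDimensional K V] (f : End K V)
    (h : f.charpoly.Splits) : ⨆ μ, f.maxGenEigenspace μ = ⊤ := by
  have := f.ker_aeval_le_iSup_maxGenEigenspace_of_splits h f.charpoly_monic.ne_zero
  rwa [LinearMap.aeval_self_charpoly, LinearMap.ker_zero, top_le_iff] at this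

end Splits

theorem exists_hasEigenvector_mem_of_inf_maxGenEigenspace_ne_bot {R M : Type*} [CommRing R]
    [AddCommGroup M] [Module R M] {f : End R M} {p : Submodule R M} (hp : ∀ x ∈ p, f x ∈ p)
    {μ : R} (h : p ⊓ f.maxGenEigenspace μ ≠ ⊥) : ∃ w ∈ p, f.HasEigenvector μ w := by
  rw [Submodule.inf_genEigenspace f p hp] at h
  have : HasEigenvalue (f.restrict hp) μ :=
    (hasUnifEigenvalue_iff_hasUnifEigenvalue_one ENat.top_pos).mp
      fun h' ↦ h (by rw [h', Submodule.map_bot])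
  obtain ⟨w, hw⟩ := this.exists_hasEigenvector
  exact ⟨w, w.2, eigenspace_restrict_le_eigenspace f hp μ ⟨w, hw.1, rfl⟩,
    by simpa using hw.2⟩

theorem isIntegral_of_hasEigenvector_mem_span {R K V : Type*} [CommRing R] [IsDomain R]
    [IsNoetherianRing R] [Field K] [Algebra R K] [IsFractionRing R K] [AddCommGroup V]
    [Module K V] [Module R V] [IsScalarTower R K V] {f : End K V} {μ : K} {w : V}
    (M : Submodule R V) (hM : M.FG) (hfM : ∀ y ∈ M, f y ∈ M) (hw : f.HasEigenvector μ w)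
    (hwM : w ∈ Submodule.span K (M : Set V)) : IsIntegral R μ := by
  obtain ⟨t, ht⟩ := multiple_mem_span_of_mem_localization_span
    (nonZeroDivisors R) K (M : Set V) w hwM
  rw [Submodule.span_eq] at ht
  let N : Submodule R V := M ⊓ (K ∙ w).restrictScalars R
  have htw : t • w ∈ N := ⟨ht, by
    rw [Submonoid.smul_def, ← algebraMap_smul K]
    exact Submodule.smul_mem _ _ (Submodule.mem_span_singleton_self w)⟩
  have htw0 : t • w ≠ 0 := by
    rw [Submonoid.smul_def, ← algebraMap_smul K]
    exact smul_ne_zero (IsFractionRing.to_map_ne_zero_of_mem_nonZeroDivisors t.2) hw.2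
  refine isIntegral_of_smul_mem_submodule N (fun hN ↦ htw0 (by simpa [hN] using htw))
    (hM.of_le inf_le_left) μ ?_
  rintro n ⟨hnM, hnw⟩
  obtain ⟨a, rfl⟩ := Submodule.mem_span_singleton.mp hnw
  refine ⟨?_, (K ∙ w).smul_mem μ hnw⟩
  rw [smul_comm, ← hw.apply_eq_smul, ← map_smul]
  exact hfM _ hnM

theorem mapsTo_range_pow_apply {R M : Type*} [Semiring R] [AddCommMonoid M] [Module R M]
    (f : End R M) (x : M) :
    MapsTo f (range fun k : ℕ ↦ (f ^ k) x) (range fun k : ℕ ↦ (f ^ k) x) := by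
  rintro _ ⟨k, rfl⟩
  exact ⟨k + 1, by simp only [pow_succ', mul_apply]⟩

end Module.End

/-- if `f` has rational spectrum and the whole forward orbit of `x`
under `f` lies in the ℤ-span of finitely many vectors, then `x` lies in the sum of
the generalized eigenspaces of `f` for integer eigenvalues. -/
theorem orbit_in_lattice_mem_integer_eigenspaces
    (V : Type) [AddCommGroup V] [Module ℚ V] [FiniteDimensional ℚ V]
    (f : Module.End ℚ V)
    (hsplit : ((LinearMap.charpoly f).map (RingHom.id ℚ)).Splits)
    (m : ℕ) (v : Fin m → V)
    (x : V) (hx : ∀ k : ℕ, (f ^ k) x ∈ Submodule.span ℤ (Set.range v)) :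
    x ∈ Submodule.span ℚ {w : V | ∃ (l : ℤ) (r : ℕ), 1 ≤ r ∧
      ((f - (l : ℚ) • (1 : Module.End ℚ V)) ^ r) w = 0} := by
  set orbit := range fun k : ℕ ↦ (f ^ k) x
  set U := Submodule.span ℚ orbit
  set M := Submodule.span ℤ orbit
  have hU : ∀ y ∈ U, f y ∈ U := fun _ hy ↦ (f.mapsTo_range_pow_apply x).submoduleSpan hy
  have hM : ∀ y ∈ M, f y ∈ M := fun _ hy ↦
    (f.mapsTo_range_pow_apply x).submoduleSpan (f := f.restrictScalars ℤ) hy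
  have hMfg : M.FG := (Submodule.fg_span (finite_range v)).of_le
    (Submodule.span_le.mpr (range_subset_iff.mpr hx))
  have hinteger (μ : ℚ) (hμ : U ⊓ f.maxGenEigenspace μ ≠ ⊥) :
      ∃ l : ℤ, (l : ℚ) = μ := by
    obtain ⟨w, hwU, hw⟩ := End.exists_hasEigenvector_mem_of_inf_maxGenEigenspace_ne_bot hU hμ
    exact IsIntegrallyClosed.isIntegral_iff.mp <|
      End.isIntegral_of_hasEigenvector_mem_span M hMfg hM hw
        (by rwa [Submodule.span_span_of_tower])
  have hxU : x ∈ U ⊓ ⨆ μ, f.maxGenEigenspace μ := by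
    rw [End.iSup_maxGenEigenspace_eq_top_of_splits f (by simpa using hsplit), inf_top_eq]
    exact Submodule.subset_span ⟨0, by simp⟩
  rw [Submodule.inf_iSup_genEigenspace hU] at hxU
  refine (iSup_le fun μ ↦ ?_ : ⨆ μ, U ⊓ f.maxGenEigenspace μ ≤ _) hxU
  obtain hμ | hμ := eq_or_ne (U ⊓ f.maxGenEigenspace μ) ⊥
  · exact hμ.le.trans bot_le
  obtain ⟨l, rfl⟩ := hinteger μ hμ
  intro y hy
  obtain ⟨k, hk⟩ := (End.mem_maxGenEigenspace _ _ _).mp hy.2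
  exact Submodule.subset_span
    ⟨l, k + 1, by omega, by rw [pow_succ', End.mul_apply, hk, map_zero]⟩
end
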